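/- Let T be a positive self-adjoint compact operator on a separable Hilbert space with eigenvalues satisfying c·e^{-τi} ≤ λ_i ≤ C·e^{-τi} for constants 0 < c ≤ C and τ > 0. Then there exists a constant C' > 0 such that for all sufficiently small λ > 0, N₁(λ) = Σ_{i≥1} λ_i/(λ_i + λ) ≤ C'·log(1/λ). -/
import Mathlib


/-- exponential eigenvalue decay `ev i ≍ e^{-τ i}`, `τ > 0`, implies the
effective dimension bound `N₁(λ) = Σ_i ev i/(ev i + λ) ≤ C' log(1/λ)` for all
sufficiently small `λ > 0`. -/
theorem stmt_6 (ev : ℕ → ℝ) (τ c C : ℝ) (hτ : 0 < τ) (hc : 0 < c) (hcC : c ≤ C)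
    (hlow : ∀ i : ℕ, c * Real.exp (-τ * ((i : ℝ) + 1)) ≤ ev i)
    (hup : ∀ i : ℕ, ev i ≤ C * Real.exp (-τ * ((i : ℝ) + 1))) :
    ∃ C' > (0 : ℝ), ∃ lam₀ > (0 : ℝ), ∀ lam ∈ Set.Ioo (0 : ℝ) lam₀,
      ∑' i, ev i / (ev i + lam) ≤ C' * Real.log (1 / lam) := by
  have hC : 0 < C := lt_of_lt_of_le hc hcC
  set r := Real.exp (-τ) with hrdef
  have hr0 : 0 < r := Real.exp_pos _
  have hr1 : r < 1 := Real.exp_lt_one_iff.mpr (by linarith)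
  have hexp : ∀ k : ℕ, Real.exp (-τ * (k : ℝ)) = r ^ k := by
    intro k
    rw [hrdef, ← Real.exp_nat_mul]
    ring_nf
  have hevbd : ∀ k : ℕ, ev k ≤ C * r ^ (k + 1) := by
    intro k
    have h := hup k
    rwa [show -τ * ((k : ℝ) + 1) = -τ * ((k + 1 : ℕ) : ℝ) by push_cast; ring,
      hexp] at h
  have hev0 : ∀ i, 0 < ev i := fun i =>
    lt_of_lt_of_le (by positivity) (hlow i)
  set K := C / (1 - r) with hK
  have hKpos : 0 < K := div_pos hC (by linarith)
  refine ⟨1/τ + 1 + K, by positivity, Real.exp (-1), Real.exp_pos _, ?_⟩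
  rintro lam ⟨hl0, hl1⟩
  set L := Real.log (1/lam) with hLdef
  have hLlog : L = -Real.log lam := by rw [hLdef, one_div, Real.log_inv]
  have hL1 : 1 ≤ L := by
    rw [hLlog, le_neg]
    calc Real.log lam ≤ Real.log (Real.exp (-1)) :=
          Real.log_le_log hl0 hl1.le
      _ = -1 := Real.log_exp _
  have hLpos : 0 < L := lt_of_lt_of_le one_pos hL1
  set n := ⌈L / τ⌉₊ with hn
  have hτn : L ≤ τ * n := by
    have h : L / τ ≤ (n : ℝ) := Nat.le_ceil _
    calc L = τ * (L / τ) := by field_simp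
      _ ≤ τ * n := by nlinarith
  have hrn : r ^ n ≤ lam := by
    rw [← hexp]
    calc Real.exp (-τ * n) ≤ Real.exp (Real.log lam) := by
          apply Real.exp_le_exp.mpr
          rw [hLlog] at hτn; linarith
      _ = lam := Real.exp_log hl0
  have hfle1 : ∀ i, ev i / (ev i + lam) ≤ 1 := by
    intro i
    rw [div_le_one (by have := hev0 i; linarith)]
    linarith
  have hf0 : ∀ i, 0 ≤ ev i / (ev i + lam) := by
    intro i
    have := hev0 i
    positivity
  have hfdiv : ∀ i : ℕ, ev i / (ev i + lam) ≤ ev i / lam := by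
    intro i
    apply div_le_div_of_nonneg_left (hev0 i).le hl0
    linarith [hev0 i]
  have hfg : ∀ i : ℕ, ev i / (ev i + lam) ≤ (C / lam) * r ^ (i + 1) := by
    intro i
    calc ev i / (ev i + lam) ≤ ev i / lam := hfdiv i
      _ ≤ (C * r ^ (i+1)) / lam := div_le_div_of_nonneg_right (hevbd i) hl0.le
      _ = (C / lam) * r ^ (i+1) := by ring
  have hgeom : Summable (fun i : ℕ => r ^ i) := summable_geometric_of_lt_one hr0.le hr1
  have hgsum : Summable (fun i : ℕ => (C / lam) * r ^ (i + 1)) := by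
    apply Summable.mul_left
    exact hgeom.comp_injective (add_left_injective 1)
  have hfsum : Summable (fun i : ℕ => ev i / (ev i + lam)) :=
    Summable.of_nonneg_of_le hf0 hfg hgsum
  have hsplit := (Summable.sum_add_tsum_nat_add n hfsum).symm
  have hhead : ∑ i ∈ Finset.range n, ev i / (ev i + lam) ≤ (n : ℝ) := by
    calc ∑ i ∈ Finset.range n, ev i / (ev i + lam) ≤ ∑ i ∈ Finset.range n, (1:ℝ) :=
          Finset.sum_le_sum fun i _ => hfle1 i
      _ = n := by simp
  have htail_ptwise : ∀ i : ℕ, ev (i + n) / (ev (i + n) + lam) ≤ C * r ^ i := by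
    intro i
    have h2 : ev (i + n) ≤ C * r ^ (i + n + 1) := hevbd (i + n)
    have h3 : r ^ (i + n + 1) = r ^ i * (r ^ n * r) := by ring
    have h4 : r ^ n * r ≤ lam * 1 :=
      mul_le_mul hrn hr1.le hr0.le hl0.le
    calc ev (i + n) / (ev (i + n) + lam) ≤ ev (i + n) / lam := hfdiv (i + n)
      _ ≤ (C * r ^ (i + n + 1)) / lam := div_le_div_of_nonneg_right h2 hl0.le
      _ = (C * r ^ i) * (r ^ n * r) / lam := by rw [h3]; ring
      _ ≤ (C * r ^ i) * (lam * 1) / lam := by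
          apply div_le_div_of_nonneg_right _ hl0.le
          have : 0 ≤ C * r ^ i := by positivity
          nlinarith
      _ = C * r ^ i := by field_simp
  have htail : ∑' i : ℕ, ev (i + n) / (ev (i + n) + lam) ≤ K := by
    have h5 : Summable (fun i : ℕ => C * r ^ i) := hgeom.mul_left C
    calc ∑' i : ℕ, ev (i + n) / (ev (i + n) + lam)
        ≤ ∑' i : ℕ, C * r ^ i := by
          apply Summable.tsum_le_tsum htail_ptwise _ h5
          exact (Summable.of_nonneg_of_le (fun i => hf0 _) htail_ptwise h5)
      _ = C * (1 - r)⁻¹ := by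
          rw [tsum_mul_left, tsum_geometric_of_lt_one hr0.le hr1]
      _ = K := by rw [hK, div_eq_mul_inv]
  have hnL : (n : ℝ) ≤ L / τ + 1 := by
    have := Nat.ceil_lt_add_one (show (0:ℝ) ≤ L / τ by positivity)
    exact this.le
  calc ∑' i, ev i / (ev i + lam)
      = (∑ i ∈ Finset.range n, ev i / (ev i + lam)) +
          ∑' i : ℕ, ev (i + n) / (ev (i + n) + lam) := hsplit
    _ ≤ (n : ℝ) + K := add_le_add hhead htail
    _ ≤ (L / τ + 1) + K := by linarith
    _ ≤ (1/τ + 1 + K) * L := by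
        have h6 : 0 < 1/τ := by positivity
        have h7 : L / τ = (1/τ) * L := by ring
        nlinarith
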